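/- Let p ∈ (1/2, 1). The single-agent value-based distance between the structure u₁ (one binary experiment of accuracy p about a uniform binary state) and u₂ (two conditionally independent such experiments) equals 2p(1-p)(2p-1). -/

import Mathlib

/-!
`u₁` is a garbling of `u₂` (forget one of the two signals), so `val₁(u₁, g) ≤ val₁(u₂, g)`.
Conversely, `u₂` is within ℓ¹-distance `2p(1-p)(2p-1)` of the garbling of `u₁` that keeps the
signal with probability `p² + (1-p)²` and otherwise reports the uninformative count; as
`val₁(·, g)` is 1-Lipschitz for ℓ¹ when `|g| ≤ 1`, the gap never exceeds that distance.
The problem "bet on the state or take `2p - 1`" attains it: one signal makes betting no better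
than abstaining, while two disagreeing signals (probability `2p(1-p)`) make abstaining win.
-/

open scoped BigOperators

noncomputable section

/-- A probability distribution on a finite type, given as a nonnegative function summing to 1. -/
def IsDist {α : Type*} [Fintype α] (u : α → ℝ) : Prop :=
  (∀ a, 0 ≤ u a) ∧ ∑ a, u a = 1

/-- A garbling (stochastic map / behavioral strategy). -/
def IsKernel {α β : Type*} [Fintype β] (q : α → β → ℝ) : Prop :=
  ∀ a, IsDist (q a)

/-- Expected payoff in the zero-sum Bayesian game `Γ(u,g)` when players use
behavioral strategies `σ` and `τ`. -/
def pay {K C D I J : Type*} [Fintype K] [Fintype C] [Fintype D] [Fintype I] [Fintype J]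
    (u : K × C × D → ℝ) (g : K → I → J → ℝ) (σ : C → I → ℝ) (τ : D → J → ℝ) : ℝ :=
  ∑ k, ∑ c, ∑ d, ∑ i, ∑ j, u (k, c, d) * σ c i * τ d j * g k i j

/-- The value (maxmin) of the zero-sum Bayesian game `Γ(u,g)`, player 1 maximizing. -/
def gameVal {K C D I J : Type*} [Fintype K] [Fintype C] [Fintype D] [Fintype I] [Fintype J]
    (u : K × C × D → ℝ) (g : K → I → J → ℝ) : ℝ :=
  sSup {x : ℝ | ∃ σ : C → I → ℝ, IsKernel σ ∧
    x = sInf {y : ℝ | ∃ τ : D → J → ℝ, IsKernel τ ∧ y = pay u g σ τ}}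

/-- Garbling of player 1's signal: `(q.u)(k,c,d) = ∑ c', u(k,c',d) q(c|c')`. -/
def garbleL {K C C' D : Type*} [Fintype C] (q : C → C' → ℝ) (u : K × C × D → ℝ) :
    K × C' × D → ℝ :=
  fun x => ∑ c, u (x.1, c, x.2.2) * q c x.2.1

/-- Garbling of player 2's signal: `(u.q)(k,c,d) = ∑ d', u(k,c,d') q(d|d')`. -/
def garbleR {K C D D' : Type*} [Fintype D] (q : D → D' → ℝ) (u : K × C × D → ℝ) :
    K × C × D' → ℝ :=
  fun x => ∑ d, u (x.1, x.2.1, d) * q d x.2.2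

/-- ℓ¹ distance. -/
def l1 {α : Type*} [Fintype α] (u v : α → ℝ) : ℝ := ∑ a, |u a - v a|

/-- Payoff functions bounded by 1. -/
def Bounded1 {K I J : Type*} (g : K → I → J → ℝ) : Prop := ∀ k i j, |g k i j| ≤ 1

/-- The value-based distance: sup over all finite zero-sum games (with nonempty
finite action sets, payoffs bounded by 1) of the absolute difference of values. -/
def valueDist {K C D C' D' : Type*} [Fintype K] [Fintype C] [Fintype D] [Fintype C'] [Fintype D']
    (u : K × C × D → ℝ) (v : K × C' × D' → ℝ) : ℝ :=
  sSup {x : ℝ | ∃ (m n : ℕ) (g : K → Fin (m + 1) → Fin (n + 1) → ℝ),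
    Bounded1 g ∧ x = |gameVal u g - gameVal v g|}

/-- Value of a single-agent decision problem on a single-agent information structure. -/
def val1 {K C I : Type*} [Fintype K] [Fintype C] [Fintype I] [Nonempty I]
    (u : K × C → ℝ) (g : K → I → ℝ) : ℝ :=
  ∑ c, ⨆ i, ∑ k, u (k, c) * g k i

/-- The single-agent value-based distance. -/
def valueDist1 {K C C' : Type*} [Fintype K] [Fintype C] [Fintype C']
    (u : K × C → ℝ) (v : K × C' → ℝ) : ℝ :=
  sSup {x : ℝ | ∃ (m : ℕ) (g : K → Fin (m + 1) → ℝ),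
    (∀ k i, |g k i| ≤ 1) ∧ x = |val1 u g - val1 v g|}

/-- Garbling of the signal in a single-agent structure. -/
def garble1 {K C C' : Type*} [Fintype C] (q : C → C' → ℝ) (u : K × C → ℝ) : K × C' → ℝ :=
  fun x => ∑ c, u (x.1, c) * q c x.2

end

/-- The single-agent structure induced by `n` conditionally independent binary Blackwell
experiments of accuracy `p` about a uniform binary state; the signal is the number of 1's. -/
noncomputable def uExp (p : ℝ) (n : ℕ) : Fin 2 × Fin (n + 1) → ℝ :=
  fun x => (1 / 2) * (n.choose (x.2 : ℕ) : ℝ) *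
    (if x.1 = 1 then p ^ (x.2 : ℕ) * (1 - p) ^ (n - (x.2 : ℕ))
     else p ^ (n - (x.2 : ℕ)) * (1 - p) ^ (x.2 : ℕ))

lemma sum_mul_le_iSup {K C I : Type*} [Fintype K] [Finite I] (u : K × C → ℝ) (g : K → I → ℝ)
    (c : C) (i : I) : ∑ k, u (k, c) * g k i ≤ ⨆ i, ∑ k, u (k, c) * g k i :=
  le_ciSup (f := fun i => ∑ k, u (k, c) * g k i) (Finite.bddAbove_range _) i

section Val1

variable {K C I : Type*} [Fintype K] [Fintype C] [Fintype I] [Nonempty I]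

lemma sum_le_val1 (u : K × C → ℝ) (g : K → I → ℝ) (σ : C → I) :
    ∑ c, ∑ k, u (k, c) * g k (σ c) ≤ val1 u g :=
  Finset.sum_le_sum fun c _ => sum_mul_le_iSup u g c (σ c)

lemma val1_le_sum {u : K × C → ℝ} {g : K → I → ℝ} {s : C → ℝ}
    (h : ∀ c i, ∑ k, u (k, c) * g k i ≤ s c) : val1 u g ≤ ∑ c, s c :=
  Finset.sum_le_sum fun c _ => ciSup_le (h c)

lemma val1_garble1_le {C' : Type*} [Fintype C'] {q : C → C' → ℝ} (hq : IsKernel q)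
    (u : K × C → ℝ) (g : K → I → ℝ) : val1 (garble1 q u) g ≤ val1 u g := by
  set S : C → ℝ := fun c => ⨆ i, ∑ k, u (k, c) * g k i
  calc val1 (garble1 q u) g ≤ ∑ c', ∑ c, q c c' * S c := by
        refine val1_le_sum fun c' i => ?_
        calc ∑ k, garble1 q u (k, c') * g k i = ∑ c, q c c' * ∑ k, u (k, c) * g k i := by
              simp only [garble1, Finset.sum_mul, Finset.mul_sum]
              rw [Finset.sum_comm]
              exact Finset.sum_congr rfl fun _ _ => Finset.sum_congr rfl fun _ _ => by ring
          _ ≤ ∑ c, q c c' * S c := Finset.sum_le_sum fun c _ =>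
              mul_le_mul_of_nonneg_left (sum_mul_le_iSup u g c i) ((hq c).1 c')
    _ = ∑ c, S c := by
        rw [Finset.sum_comm]
        simp only [← Finset.sum_mul, (hq _).2, one_mul]

lemma val1_le_add_l1 (u v : K × C → ℝ) {g : K → I → ℝ} (hg : ∀ k i, |g k i| ≤ 1) :
    val1 u g ≤ val1 v g + l1 u v := by
  have hl1 : l1 u v = ∑ c, ∑ k, |u (k, c) - v (k, c)| := by
    rw [l1, Fintype.sum_prod_type, Finset.sum_comm]
  rw [hl1, show val1 v g = ∑ c, ⨆ i, ∑ k, v (k, c) * g k i from rfl,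
    ← Finset.sum_add_distrib]
  refine val1_le_sum fun c i => ?_
  have herr : ∑ k, (u (k, c) - v (k, c)) * g k i ≤ ∑ k, |u (k, c) - v (k, c)| :=
    Finset.sum_le_sum fun k _ => by
      calc (u (k, c) - v (k, c)) * g k i ≤ |(u (k, c) - v (k, c)) * g k i| := le_abs_self _
        _ = |u (k, c) - v (k, c)| * |g k i| := abs_mul _ _
        _ ≤ |u (k, c) - v (k, c)| := mul_le_of_le_one_right (abs_nonneg _) (hg k i)
  simp only [sub_mul, Finset.sum_sub_distrib] at herr
  linarith [sum_mul_le_iSup v g c i]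

end Val1

lemma uExp_one (p : ℝ) :
    uExp p 1 = fun x => ![![p / 2, (1 - p) / 2], ![(1 - p) / 2, p / 2]] x.1 x.2 := by
  funext ⟨k, c⟩
  fin_cases k <;> fin_cases c <;> simp [uExp] <;> ring

lemma uExp_two (p : ℝ) :
    uExp p 2 = fun x =>
      ![![p ^ 2 / 2, p * (1 - p), (1 - p) ^ 2 / 2], ![(1 - p) ^ 2 / 2, p * (1 - p), p ^ 2 / 2]]
        x.1 x.2 := by
  funext ⟨k, c⟩
  fin_cases k <;> fin_cases c <;> simp [uExp] <;> ring

noncomputable def forgetOneSignal : Fin 3 → Fin 2 → ℝ := ![![1, 0], ![1 / 2, 1 / 2], ![0, 1]]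

lemma isKernel_forgetOneSignal : IsKernel forgetOneSignal := by
  intro c
  constructor
  · intro i; fin_cases c <;> fin_cases i <;> norm_num [forgetOneSignal]
  · fin_cases c <;> norm_num [forgetOneSignal, Fin.sum_univ_two]

lemma garble1_forgetOneSignal_uExp_two (p : ℝ) :
    garble1 forgetOneSignal (uExp p 2) = uExp p 1 := by
  rw [uExp_one, uExp_two]
  funext ⟨k, c⟩
  fin_cases k <;> fin_cases c <;> simp [garble1, forgetOneSignal, Fin.sum_univ_three] <;> ring

/-- Keeps the signal with probability `p² + (1-p)²`, otherwise reports the uninformative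
count `1`. -/
noncomputable def splitSignal (p : ℝ) : Fin 2 → Fin 3 → ℝ :=
  ![![p ^ 2 + (1 - p) ^ 2, 2 * p * (1 - p), 0], ![0, 2 * p * (1 - p), p ^ 2 + (1 - p) ^ 2]]

lemma isKernel_splitSignal {p : ℝ} (hp0 : 0 ≤ p) (hp1 : p ≤ 1) : IsKernel (splitSignal p) := by
  have hq : 0 ≤ 2 * p * (1 - p) := by nlinarith
  intro c
  constructor
  · intro i; fin_cases c <;> fin_cases i <;> simp [splitSignal, hq] <;> positivity
  · fin_cases c <;> simp [splitSignal, Fin.sum_univ_three] <;> ring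

lemma l1_uExp_two_garble1_splitSignal {p : ℝ} (hp0 : 0 ≤ p) (hp1 : p ≤ 1) :
    l1 (uExp p 2) (garble1 (splitSignal p) (uExp p 1)) = 2 * p * (1 - p) * |2 * p - 1| := by
  rw [l1, Fintype.sum_prod_type, uExp_one, uExp_two]
  simp only [Nat.reduceAdd, Fin.isValue, garble1, splitSignal, Fin.sum_univ_two,
    Fin.sum_univ_three, Matrix.cons_val', Matrix.cons_val_fin_one, Matrix.cons_val_zero,
    Matrix.cons_val_one, Matrix.cons_val, mul_zero, add_zero, zero_add]
  have hw : 0 ≤ p * (1 - p) / 2 := by nlinarith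
  rw [show p ^ 2 / 2 - p / 2 * (p ^ 2 + (1 - p) ^ 2) = p * (1 - p) / 2 * (2 * p - 1) by ring,
    show (1 - p) ^ 2 / 2 - (1 - p) / 2 * (p ^ 2 + (1 - p) ^ 2) = -(p * (1 - p) / 2 * (2 * p - 1))
      by ring,
    show p * (1 - p) - (p / 2 * (2 * p * (1 - p)) + (1 - p) / 2 * (2 * p * (1 - p))) = 0 by ring,
    show p * (1 - p) - ((1 - p) / 2 * (2 * p * (1 - p)) + p / 2 * (2 * p * (1 - p))) = 0 by ring,
    abs_neg, abs_zero, abs_mul, abs_of_nonneg hw]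
  ring

section Gap

variable {I : Type*} [Fintype I] [Nonempty I] {g : Fin 2 → I → ℝ}

lemma val1_uExp_two_le {p : ℝ} (hp0 : 0 ≤ p) (hp1 : p ≤ 1) (hg : ∀ k i, |g k i| ≤ 1) :
    val1 (uExp p 2) g ≤ val1 (uExp p 1) g + 2 * p * (1 - p) * |2 * p - 1| := by
  have hclose := val1_le_add_l1 (uExp p 2) (garble1 (splitSignal p) (uExp p 1)) hg
  rw [l1_uExp_two_garble1_splitSignal hp0 hp1] at hclose
  linarith [val1_garble1_le (isKernel_splitSignal hp0 hp1) (uExp p 1) g]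

lemma abs_val1_uExp_one_sub_uExp_two_le {p : ℝ} (hp : 1 / 2 ≤ p) (hp1 : p ≤ 1)
    (hg : ∀ k i, |g k i| ≤ 1) :
    |val1 (uExp p 1) g - val1 (uExp p 2) g| ≤ 2 * p * (1 - p) * (2 * p - 1) := by
  have hgarble := val1_garble1_le isKernel_forgetOneSignal (uExp p 2) g
  rw [garble1_forgetOneSignal_uExp_two] at hgarble
  have hsplit := val1_uExp_two_le (by linarith) hp1 hg
  rw [abs_of_nonneg (by linarith : 0 ≤ 2 * p - 1)] at hsplit
  have hD : 0 ≤ 2 * p * (1 - p) * (2 * p - 1) := by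
    have : 0 ≤ 1 - p := by linarith
    have : 0 ≤ 2 * p - 1 := by linarith
    positivity
  rw [abs_sub_le_iff]
  constructor <;> linarith

end Gap

/-- States are rows, actions columns: bet on state `0`, bet on state `1`, or take `2p - 1`. -/
def guessOrSafe (p : ℝ) : Fin 2 → Fin 3 → ℝ := ![![1, -1, 2 * p - 1], ![-1, 1, 2 * p - 1]]

lemma abs_guessOrSafe_le {p : ℝ} (hp0 : 0 ≤ p) (hp1 : p ≤ 1) (k : Fin 2) (i : Fin 3) :
    |guessOrSafe p k i| ≤ 1 := by
  fin_cases k <;> fin_cases i <;> simp [guessOrSafe, abs_le] <;> constructor <;> linarith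

lemma val1_uExp_one_guessOrSafe_le {p : ℝ} (hp : 1 / 2 ≤ p) :
    val1 (uExp p 1) (guessOrSafe p) ≤ 2 * p - 1 := by
  have hbound : ∀ c i, ∑ k, uExp p 1 (k, c) * guessOrSafe p k i ≤ (2 * p - 1) / 2 := by
    intro c i
    rw [uExp_one]
    fin_cases c <;> fin_cases i <;> simp [guessOrSafe, Fin.sum_univ_two] <;> linarith
  calc val1 (uExp p 1) (guessOrSafe p) ≤ ∑ _c : Fin 2, (2 * p - 1) / 2 := val1_le_sum hbound
    _ = 2 * p - 1 := by
      simp only [Finset.sum_const, Finset.card_univ, Fintype.card_fin, nsmul_eq_mul, Nat.cast_ofNat]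
      ring

lemma le_val1_uExp_two_guessOrSafe (p : ℝ) :
    (2 * p - 1) + 2 * p * (1 - p) * (2 * p - 1) ≤ val1 (uExp p 2) (guessOrSafe p) := by
  refine le_of_eq_of_le ?_ (sum_le_val1 (uExp p 2) (guessOrSafe p) ![0, 2, 1])
  rw [uExp_two]
  simp only [Nat.reduceAdd, Matrix.cons_val', Matrix.cons_val_fin_one, guessOrSafe, Fin.isValue,
    Fin.sum_univ_two, Matrix.cons_val_zero, Matrix.cons_val_one, Fin.sum_univ_three, mul_one, mul_neg,
    Matrix.cons_val]
  ring

theorem stmt12 (p : ℝ) (hp : 1 / 2 < p) (hp1 : p < 1) :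
    valueDist1 (uExp p 1) (uExp p 2) = 2 * p * (1 - p) * (2 * p - 1) := by
  set S := {x : ℝ | ∃ (m : ℕ) (g : Fin 2 → Fin (m + 1) → ℝ),
    (∀ k i, |g k i| ≤ 1) ∧ x = |val1 (uExp p 1) g - val1 (uExp p 2) g|}
  have hbdd : ∀ x ∈ S, x ≤ 2 * p * (1 - p) * (2 * p - 1) := by
    rintro x ⟨m, g, hg, rfl⟩
    exact abs_val1_uExp_one_sub_uExp_two_le hp.le hp1.le hg
  have hwitness : _ ∈ S := ⟨2, guessOrSafe p, abs_guessOrSafe_le (by linarith) hp1.le, rfl⟩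
  refine le_antisymm (csSup_le ⟨_, hwitness⟩ hbdd) (le_csSup_of_le ⟨_, hbdd⟩ hwitness ?_)
  rw [abs_sub_comm]
  refine le_trans ?_ (le_abs_self _)
  linarith [val1_uExp_one_guessOrSafe_le hp.le, le_val1_uExp_two_guessOrSafe p]
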